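/- Let A and B be CIF vector subspaces of V. Then the bracket product [A, B] is a CIF vector subspace of V; that is, for all x, y ∈ V and α ∈ K: λ_{[A,B]}(x+y) ≥ λ_{[A,B]}(x) ∧ λ_{[A,B]}(y), ρ_{[A,B]}(x+y) ≤ ρ_{[A,B]}(x) ∨ ρ_{[A,B]}(y), λ_{[A,B]}(αx) ≥ λ_{[A,B]}(x), ρ_{[A,B]}(αx) ≤ ρ_{[A,B]}(x), λ_{[A,B]}(0) = 1 and ρ_{[A,B]}(0) = 0. -/
import Mathlib


namespace CIF

/-- A complex intuitionistic fuzzy (CIF) set on `V`, recorded by the four real-valued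
degree functions `r, ω, r̂, ω̂` (so that the membership degree is `λ = r·e^{i2πω}` and
the non-membership degree is `ρ = r̂·e^{i2πω̂}`).  The order on such complex values is
componentwise, so all notions below are phrased componentwise in the four functions. -/
structure CIFSet (V : Type*) where
  r : V → ℝ
  w : V → ℝ
  rhat : V → ℝ
  what : V → ℝ

namespace CIFSet

/-- `A` is a genuine CIF set: all degree functions take values in `[0,1]` and
`r_A(x) + r̂_A(x) ≤ 1` for all `x`. -/
def IsCIF {V : Type*} (A : CIFSet V) : Prop :=
  ∀ x, A.r x ∈ Set.Icc (0 : ℝ) 1 ∧ A.w x ∈ Set.Icc (0 : ℝ) 1 ∧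
    A.rhat x ∈ Set.Icc (0 : ℝ) 1 ∧ A.what x ∈ Set.Icc (0 : ℝ) 1 ∧
    A.r x + A.rhat x ≤ 1

/-- `A ⊆ B` : `λ_A(x) ≤ λ_B(x)` and `ρ_A(x) ≥ ρ_B(x)` for all `x`
(componentwise in `r, ω`, resp. `r̂, ω̂`). -/
def Subset {V : Type*} (A B : CIFSet V) : Prop :=
  ∀ x, A.r x ≤ B.r x ∧ A.w x ≤ B.w x ∧ B.rhat x ≤ A.rhat x ∧ B.what x ≤ A.what x

/-- `A` is homogeneous with `B`. -/
def Homog {V : Type*} (A B : CIFSet V) : Prop :=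
  (∀ x y, A.r x ≤ B.r y ↔ A.w x ≤ B.w y) ∧
  (∀ x y, A.rhat x ≤ B.rhat y ↔ A.what x ≤ B.what y)

end CIFSet

/-- Supremum of `min (f a) (g b)` over all decompositions `x = a + b`
(the `insert 0` is harmless since all values are `≥ 0`, and makes the value `0`
when no decomposition exists). -/
noncomputable def supDecomp {V : Type*} [Add V] (f g : V → ℝ) (x : V) : ℝ :=
  sSup (insert 0 {t | ∃ a b : V, x = a + b ∧ t = min (f a) (g b)})

/-- Infimum of `max (f a) (g b)` over all decompositions `x = a + b`
(the `insert 1` is harmless since all values are `≤ 1`, and makes the value `1`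
when no decomposition exists). -/
noncomputable def infDecomp {V : Type*} [Add V] (f g : V → ℝ) (x : V) : ℝ :=
  sInf (insert 1 {t | ∃ a b : V, x = a + b ∧ t = max (f a) (g b)})

/-- The complex intuitionistic sum `A + B` of two CIF sets. -/
noncomputable def CIFSet.sum {V : Type*} [Add V] (A B : CIFSet V) : CIFSet V where
  r := supDecomp A.r B.r
  w := supDecomp A.w B.w
  rhat := infDecomp A.rhat B.rhat
  what := infDecomp A.what B.what

/-- `A` is a CIF vector subspace of `V` (with the normalizations
`λ_A(0) = 1·e^{i2π·1}` and `ρ_A(0) = 0·e^{i2π·0}`). -/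
structure CIFSet.IsSubspace (K : Type*) [Field K] {V : Type*} [AddCommGroup V]
    [Module K V] (A : CIFSet V) : Prop where
  isCIF : A.IsCIF
  add_r : ∀ x y, min (A.r x) (A.r y) ≤ A.r (x + y)
  add_w : ∀ x y, min (A.w x) (A.w y) ≤ A.w (x + y)
  add_rhat : ∀ x y, A.rhat (x + y) ≤ max (A.rhat x) (A.rhat y)
  add_what : ∀ x y, A.what (x + y) ≤ max (A.what x) (A.what y)
  smul_r : ∀ (c : K) (x : V), A.r x ≤ A.r (c • x)
  smul_w : ∀ (c : K) (x : V), A.w x ≤ A.w (c • x)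
  smul_rhat : ∀ (c : K) (x : V), A.rhat (c • x) ≤ A.rhat x
  smul_what : ∀ (c : K) (x : V), A.what (c • x) ≤ A.what x
  r_zero : A.r 0 = 1
  w_zero : A.w 0 = 1
  rhat_zero : A.rhat 0 = 0
  what_zero : A.what 0 = 0

open Classical in
/-- The scalar multiple `c • A` of a CIF set: for `c ≠ 0` it is `x ↦ A(c⁻¹ x)`;
for `c = 0` it is `1 = 1·e^{i2π·1}` (resp. `ρ = 0`) at `0`, and `λ = 0`, `ρ = 1·e^{i2π·1}`
elsewhere. -/
noncomputable def CIFSet.smulCIF {K : Type*} [Field K] {V : Type*} [AddCommGroup V]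
    [Module K V] (c : K) (A : CIFSet V) : CIFSet V where
  r x := if c = 0 then (if x = 0 then 1 else 0) else A.r (c⁻¹ • x)
  w x := if c = 0 then (if x = 0 then 1 else 0) else A.w (c⁻¹ • x)
  rhat x := if c = 0 then (if x = 0 then 0 else 1) else A.rhat (c⁻¹ • x)
  what x := if c = 0 then (if x = 0 then 0 else 1) else A.what (c⁻¹ • x)

/-- The set of values `minᵢ (min (f xᵢ) (g yᵢ))` over all finite representations
`x = Σᵢ cᵢ • ⁅xᵢ, yᵢ⁆` with `cᵢ ∈ K`, `xᵢ, yᵢ ∈ V` (nonempty index family). -/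
def bracketRepMin (K : Type*) [Field K] {V : Type*} [AddCommGroup V] [Module K V]
    (br : V → V → V) (f g : V → ℝ) (x : V) : Set ℝ :=
  {t | ∃ (n : ℕ) (c : Fin (n + 1) → K) (a b : Fin (n + 1) → V),
    x = ∑ i, c i • br (a i) (b i) ∧
    t = Finset.univ.inf' Finset.univ_nonempty fun i => min (f (a i)) (g (b i))}

/-- The set of values `maxᵢ (max (f xᵢ) (g yᵢ))` over all finite representations
`x = Σᵢ cᵢ • ⁅xᵢ, yᵢ⁆`. -/
def bracketRepMax (K : Type*) [Field K] {V : Type*} [AddCommGroup V] [Module K V]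
    (br : V → V → V) (f g : V → ℝ) (x : V) : Set ℝ :=
  {t | ∃ (n : ℕ) (c : Fin (n + 1) → K) (a b : Fin (n + 1) → V),
    x = ∑ i, c i • br (a i) (b i) ∧
    t = Finset.univ.sup' Finset.univ_nonempty fun i => max (f (a i)) (g (b i))}

/-- The complex intuitionistic fuzzy bracket product `[A, B]` of two CIF sets, with
respect to the bracket `br` on `V`:  `r` and `ω` are the sup over all finite
representations `x = Σᵢ cᵢ [xᵢ, yᵢ]` of `minᵢ min(·(xᵢ), ·(yᵢ))` (and `0` when no
representation exists), `r̂` and `ω̂` are the inf of `maxᵢ max(·(xᵢ), ·(yᵢ))`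
(and `1` when no representation exists). -/
noncomputable def CIFSet.bracket (K : Type*) [Field K] {V : Type*} [AddCommGroup V]
    [Module K V] (br : V → V → V) (A B : CIFSet V) : CIFSet V where
  r x := sSup (insert 0 (bracketRepMin K br A.r B.r x))
  w x := sSup (insert 0 (bracketRepMin K br A.w B.w x))
  rhat x := sInf (insert 1 (bracketRepMax K br A.rhat B.rhat x))
  what x := sInf (insert 1 (bracketRepMax K br A.what B.what x))

/-- `V`, with the grading given by the complementary submodules `V0, V1` and the
bracket `br`, is a Lie superalgebra over `K`: the bracket is bilinear, respects the
grading, and satisfies super skew-symmetry and the super Jacobi identity on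
homogeneous elements (grades are recorded as `Bool`, `false ↦ V0`, `true ↦ V1`). -/
structure IsLieSuper (K : Type*) [Field K] {V : Type*} [AddCommGroup V] [Module K V]
    (V0 V1 : Submodule K V) (br : V → V → V) : Prop where
  compl : IsCompl V0 V1
  add_left : ∀ x y z : V, br (x + y) z = br x z + br y z
  add_right : ∀ x y z : V, br x (y + z) = br x y + br x z
  smul_left : ∀ (c : K) (x y : V), br (c • x) y = c • br x y
  smul_right : ∀ (c : K) (x y : V), br x (c • y) = c • br x y
  grade : ∀ (g h : Bool), ∀ x ∈ (bif g then V1 else V0), ∀ y ∈ (bif h then V1 else V0),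
    br x y ∈ (bif xor g h then V1 else V0)
  skew : ∀ (g h : Bool), ∀ x ∈ (bif g then V1 else V0), ∀ y ∈ (bif h then V1 else V0),
    br x y = -(((-1 : K) ^ ((bif g then 1 else 0) * (bif h then 1 else 0) : ℕ)) • br y x)
  jacobi : ∀ (g h k : Bool), ∀ x ∈ (bif g then V1 else V0), ∀ y ∈ (bif h then V1 else V0),
    ∀ z ∈ (bif k then V1 else V0),
    ((-1 : K) ^ ((bif g then 1 else 0) * (bif k then 1 else 0) : ℕ)) • br x (br y z) +
    ((-1 : K) ^ ((bif g then 1 else 0) * (bif h then 1 else 0) : ℕ)) • br y (br z x) +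
    ((-1 : K) ^ ((bif h then 1 else 0) * (bif k then 1 else 0) : ℕ)) • br z (br x y) = 0

/-- `A` is a ℤ₂-graded CIF vector subspace of `V` with graded components `A0, A1`:
`A0, A1` are CIF vector subspaces supported in `V0` resp. `V1` (membership degree `0`
and non-membership degree `1` outside), and `A = A0 + A1`. -/
structure IsGradedSubspace (K : Type*) [Field K] {V : Type*} [AddCommGroup V]
    [Module K V] (V0 V1 : Submodule K V) (A A0 A1 : CIFSet V) : Prop where
  subA : CIFSet.IsSubspace K A
  sub0 : CIFSet.IsSubspace K A0
  sub1 : CIFSet.IsSubspace K A1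
  supp0 : ∀ x, x ∉ V0 → A0.r x = 0 ∧ A0.w x = 0 ∧ A0.rhat x = 1 ∧ A0.what x = 1
  supp1 : ∀ x, x ∉ V1 → A1.r x = 0 ∧ A1.w x = 0 ∧ A1.rhat x = 1 ∧ A1.what x = 1
  eq : A = A0.sum A1

/-- `A` is a ℤ₂-graded CIF vector subspace of `V`. -/
def IsGraded (K : Type*) [Field K] {V : Type*} [AddCommGroup V] [Module K V]
    (V0 V1 : Submodule K V) (A : CIFSet V) : Prop :=
  ∃ A0 A1 : CIFSet V, IsGradedSubspace K V0 V1 A A0 A1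

/-- `A` is a CIF ideal of the Lie superalgebra `V`: a ℤ₂-graded CIF vector subspace
with `λ_A([x,y]) ≥ λ_A(x) ∨ λ_A(y)` and `ρ_A([x,y]) ≤ ρ_A(x) ∧ ρ_A(y)`. -/
structure IsIdeal (K : Type*) [Field K] {V : Type*} [AddCommGroup V] [Module K V]
    (V0 V1 : Submodule K V) (br : V → V → V) (A : CIFSet V) : Prop where
  graded : IsGraded K V0 V1 A
  br_r : ∀ x y, max (A.r x) (A.r y) ≤ A.r (br x y)
  br_w : ∀ x y, max (A.w x) (A.w y) ≤ A.w (br x y)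
  br_rhat : ∀ x y, A.rhat (br x y) ≤ min (A.rhat x) (A.rhat y)
  br_what : ∀ x y, A.what (br x y) ≤ min (A.what x) (A.what y)

/-- `f : V → V'` is an anti-homomorphism of Lie superalgebras: a `K`-linear map
preserving the grading with `f [x, y] = -[f x, f y]`. -/
structure IsAntiHom (K : Type*) [Field K] {V V' : Type*} [AddCommGroup V] [Module K V]
    [AddCommGroup V'] [Module K V'] (V0 V1 : Submodule K V) (W0 W1 : Submodule K V')
    (br : V → V → V) (br' : V' → V' → V') (f : V → V') : Prop where
  map_add : ∀ x y, f (x + y) = f x + f y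
  map_smul : ∀ (c : K) (x : V), f (c • x) = c • f x
  map_gr0 : ∀ x ∈ V0, f x ∈ W0
  map_gr1 : ∀ x ∈ V1, f x ∈ W1
  map_br : ∀ x y, f (br x y) = -br' (f x) (f y)

open Classical in
/-- The image `f(A)` of a CIF set under `f`: `λ_{f(A)}(y) = sup_{f x = y} λ_A(x)`
(componentwise) for `y` in the range of `f`, and `0` otherwise; `ρ_{f(A)}(y)` is the
corresponding inf, and `1` outside the range. -/
noncomputable def CIFSet.image {V V' : Type*} (f : V → V') (A : CIFSet V) :
    CIFSet V' where
  r y := if y ∈ Set.range f then sSup {t | ∃ x, f x = y ∧ t = A.r x} else 0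
  w y := if y ∈ Set.range f then sSup {t | ∃ x, f x = y ∧ t = A.w x} else 0
  rhat y := if y ∈ Set.range f then sInf {t | ∃ x, f x = y ∧ t = A.rhat x} else 1
  what y := if y ∈ Set.range f then sInf {t | ∃ x, f x = y ∧ t = A.what x} else 1

/-- The preimage `f⁻¹(B)` of a CIF set under `f`: `λ_{f⁻¹(B)}(x) = λ_B(f x)` and
`ρ_{f⁻¹(B)}(x) = ρ_B(f x)`. -/
def CIFSet.preimage {V V' : Type*} (f : V → V') (B : CIFSet V') : CIFSet V where
  r x := B.r (f x)
  w x := B.w (f x)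
  rhat x := B.rhat (f x)
  what x := B.what (f x)


section BracketAux

variable {K : Type*} [Field K] {V : Type*} [AddCommGroup V] [Module K V]
variable {br : V → V → V} {f g : V → ℝ}

lemma repMin_le_one (hf : ∀ x, f x ≤ 1) (hg : ∀ x, g x ≤ 1) {x : V} :
    ∀ t ∈ insert (0:ℝ) (bracketRepMin K br f g x), t ≤ 1 := by
  rintro t (rfl | ⟨n, c, a, b, hx, rfl⟩)
  · norm_num
  · exact le_trans (Finset.inf'_le _ (Finset.mem_univ 0))
      (le_trans (min_le_left _ _) (hf _))

lemma zero_le_repMax (hf : ∀ x, 0 ≤ f x) (hg : ∀ x, 0 ≤ g x) {x : V} :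
    ∀ t ∈ insert (1:ℝ) (bracketRepMax K br f g x), 0 ≤ t := by
  rintro t (rfl | ⟨n, c, a, b, hx, rfl⟩)
  · norm_num
  · exact le_trans (le_trans (hf (a 0)) (le_max_left _ _))
      (Finset.le_sup' (fun i => max (f (a i)) (g (b i))) (Finset.mem_univ 0))

lemma repMin_smul (c : K) {x : V} {t : ℝ} (ht : t ∈ bracketRepMin K br f g x) :
    t ∈ bracketRepMin K br f g (c • x) := by
  obtain ⟨n, d, a, b, hx, rfl⟩ := ht
  exact ⟨n, fun i => c * d i, a, b, by rw [hx, Finset.smul_sum]; simp [smul_smul], rfl⟩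

lemma repMax_smul (c : K) {x : V} {t : ℝ} (ht : t ∈ bracketRepMax K br f g x) :
    t ∈ bracketRepMax K br f g (c • x) := by
  obtain ⟨n, d, a, b, hx, rfl⟩ := ht
  exact ⟨n, fun i => c * d i, a, b, by rw [hx, Finset.smul_sum]; simp [smul_smul], rfl⟩

lemma repMin_zero (hbr : br 0 0 = 0) (hf : f 0 = 1) (hg : g 0 = 1) :
    (1:ℝ) ∈ bracketRepMin K br f g (0 : V) :=
  ⟨0, fun _ => 1, fun _ => 0, fun _ => 0, by simp [hbr], by simp [hf, hg]⟩

lemma repMax_zero (hbr : br 0 0 = 0) (hf : f 0 = 0) (hg : g 0 = 0) :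
    (0:ℝ) ∈ bracketRepMax K br f g (0 : V) :=
  ⟨0, fun _ => 1, fun _ => 0, fun _ => 0, by simp [hbr], by simp [hf, hg]⟩

lemma repMin_add {x y : V} {t s : ℝ} (ht : t ∈ bracketRepMin K br f g x)
    (hs : s ∈ bracketRepMin K br f g y) :
    ∃ u ∈ bracketRepMin K br f g (x + y), min t s ≤ u := by
  obtain ⟨n, c, a, b, hx, rfl⟩ := ht
  obtain ⟨m, c', a', b', hy, rfl⟩ := hs
  have hnm : (n + m + 1) + 1 = (n + 1) + (m + 1) := by ring
  refine ⟨_, ⟨n + m + 1, fun i => Fin.append c c' (finCongr hnm i),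
    fun i => Fin.append a a' (finCongr hnm i),
    fun i => Fin.append b b' (finCongr hnm i), ?_, rfl⟩, ?_⟩
  · rw [hx, hy, Fintype.sum_equiv (finCongr hnm) _
      (fun j => Fin.append c c' j • br (Fin.append a a' j) (Fin.append b b' j))
      (fun i => rfl)]
    conv_rhs => rw [Fin.sum_univ_add]
    simp [Fin.append_left, Fin.append_right]
  · apply Finset.le_inf'
    intro i _
    beta_reduce
    generalize finCongr hnm i = j
    induction j using Fin.addCases with
    | left j =>
        simp only [Fin.append_left]
        exact (min_le_left _ _).trans (Finset.inf'_le _ (Finset.mem_univ j))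
    | right j =>
        simp only [Fin.append_right]
        exact (min_le_right _ _).trans (Finset.inf'_le _ (Finset.mem_univ j))

lemma repMax_add {x y : V} {t s : ℝ} (ht : t ∈ bracketRepMax K br f g x)
    (hs : s ∈ bracketRepMax K br f g y) :
    ∃ u ∈ bracketRepMax K br f g (x + y), u ≤ max t s := by
  obtain ⟨n, c, a, b, hx, rfl⟩ := ht
  obtain ⟨m, c', a', b', hy, rfl⟩ := hs
  have hnm : (n + m + 1) + 1 = (n + 1) + (m + 1) := by ring
  refine ⟨_, ⟨n + m + 1, fun i => Fin.append c c' (finCongr hnm i),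
    fun i => Fin.append a a' (finCongr hnm i),
    fun i => Fin.append b b' (finCongr hnm i), ?_, rfl⟩, ?_⟩
  · rw [hx, hy, Fintype.sum_equiv (finCongr hnm) _
      (fun j => Fin.append c c' j • br (Fin.append a a' j) (Fin.append b b' j))
      (fun i => rfl)]
    conv_rhs => rw [Fin.sum_univ_add]
    simp [Fin.append_left, Fin.append_right]
  · apply Finset.sup'_le
    intro i _
    beta_reduce
    generalize finCongr hnm i = j
    induction j using Fin.addCases with
    | left j =>
        simp only [Fin.append_left]
        exact (Finset.le_sup' (fun i => max (f (a i)) (g (b i)))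
          (Finset.mem_univ j)).trans (le_max_left _ _)
    | right j =>
        simp only [Fin.append_right]
        exact (Finset.le_sup' (fun i => max (f (a' i)) (g (b' i)))
          (Finset.mem_univ j)).trans (le_max_right _ _)

end BracketAux

theorem bracket_isSubspace {K : Type*} [Field K] {V : Type*} [AddCommGroup V] [Module K V]
    (V0 V1 : Submodule K V) (br : V → V → V) (hLS : IsLieSuper K V0 V1 br)
    (A B : CIFSet V) (hA : CIFSet.IsSubspace K A) (hB : CIFSet.IsSubspace K B) :
    CIFSet.IsSubspace K (CIFSet.bracket K br A B) := by
  classical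
  have hbr00 : br 0 0 = 0 := by simpa using hLS.smul_left 0 0 0
  -- generic facts for the sup-type components (r and w)
  have supFacts : ∀ f g : V → ℝ, (∀ x, f x ≤ 1) → (∀ x, g x ≤ 1) → f 0 = 1 → g 0 = 1 →
      (∀ x : V, 0 ≤ sSup (insert 0 (bracketRepMin K br f g x)) ∧
        sSup (insert 0 (bracketRepMin K br f g x)) ≤ 1) ∧
      (∀ x y : V, min (sSup (insert 0 (bracketRepMin K br f g x)))
        (sSup (insert 0 (bracketRepMin K br f g y))) ≤
        sSup (insert 0 (bracketRepMin K br f g (x + y)))) ∧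
      (∀ (c : K) (x : V), sSup (insert 0 (bracketRepMin K br f g x)) ≤
        sSup (insert 0 (bracketRepMin K br f g (c • x)))) ∧
      sSup (insert 0 (bracketRepMin K br f g (0 : V))) = 1 := by
    intro f g hf1 hg1 hfz hgz
    have hbdd : ∀ x : V, BddAbove (insert (0:ℝ) (bracketRepMin K br f g x)) :=
      fun x => ⟨1, fun t ht => repMin_le_one hf1 hg1 t ht⟩
    have hne : ∀ x : V, (insert (0:ℝ) (bracketRepMin K br f g x)).Nonempty :=
      fun x => ⟨0, Set.mem_insert _ _⟩
    have hle1 : ∀ x : V, sSup (insert 0 (bracketRepMin K br f g x)) ≤ 1 :=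
      fun x => csSup_le (hne x) (repMin_le_one hf1 hg1)
    have hge0 : ∀ x : V, 0 ≤ sSup (insert 0 (bracketRepMin K br f g x)) :=
      fun x => le_csSup (hbdd x) (Set.mem_insert _ _)
    refine ⟨fun x => ⟨hge0 x, hle1 x⟩, ?_, ?_, ?_⟩
    · intro x y
      by_contra h
      push_neg at h
      rw [lt_min_iff] at h
      obtain ⟨t, ht, hst⟩ := exists_lt_of_lt_csSup (hne x) h.1
      obtain ⟨s, hs, hss⟩ := exists_lt_of_lt_csSup (hne y) h.2
      rcases ht with rfl | ht
      · exact absurd hst (not_lt.2 (hge0 _))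
      rcases hs with rfl | hs
      · exact absurd hss (not_lt.2 (hge0 _))
      obtain ⟨u, hu, huts⟩ := repMin_add ht hs
      have : sSup (insert 0 (bracketRepMin K br f g (x + y))) < u :=
        lt_of_lt_of_le (lt_min hst hss) huts
      exact absurd (le_csSup (hbdd _) (Set.mem_insert_of_mem _ hu)) (not_le.2 this)
    · intro c x
      refine csSup_le (hne x) ?_
      rintro t (rfl | ht)
      · exact hge0 _
      · exact le_csSup (hbdd _) (Set.mem_insert_of_mem _ (repMin_smul c ht))
    · exact le_antisymm (hle1 0)
        (le_csSup (hbdd 0) (Set.mem_insert_of_mem _ (repMin_zero hbr00 hfz hgz)))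
  -- generic facts for the inf-type components (rhat and what)
  have infFacts : ∀ f g : V → ℝ, (∀ x, 0 ≤ f x) → (∀ x, 0 ≤ g x) → f 0 = 0 → g 0 = 0 →
      (∀ x : V, 0 ≤ sInf (insert 1 (bracketRepMax K br f g x)) ∧
        sInf (insert 1 (bracketRepMax K br f g x)) ≤ 1) ∧
      (∀ x y : V, sInf (insert 1 (bracketRepMax K br f g (x + y))) ≤
        max (sInf (insert 1 (bracketRepMax K br f g x)))
          (sInf (insert 1 (bracketRepMax K br f g y)))) ∧
      (∀ (c : K) (x : V), sInf (insert 1 (bracketRepMax K br f g (c • x))) ≤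
        sInf (insert 1 (bracketRepMax K br f g x))) ∧
      sInf (insert 1 (bracketRepMax K br f g (0 : V))) = 0 := by
    intro f g hf0 hg0 hfz hgz
    have hbdd : ∀ x : V, BddBelow (insert (1:ℝ) (bracketRepMax K br f g x)) :=
      fun x => ⟨0, fun t ht => zero_le_repMax hf0 hg0 t ht⟩
    have hne : ∀ x : V, (insert (1:ℝ) (bracketRepMax K br f g x)).Nonempty :=
      fun x => ⟨1, Set.mem_insert _ _⟩
    have hge0 : ∀ x : V, 0 ≤ sInf (insert 1 (bracketRepMax K br f g x)) :=
      fun x => le_csInf (hne x) (zero_le_repMax hf0 hg0)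
    have hle1 : ∀ x : V, sInf (insert 1 (bracketRepMax K br f g x)) ≤ 1 :=
      fun x => csInf_le (hbdd x) (Set.mem_insert _ _)
    refine ⟨fun x => ⟨hge0 x, hle1 x⟩, ?_, ?_, ?_⟩
    · intro x y
      by_contra h
      push_neg at h
      rw [max_lt_iff] at h
      obtain ⟨t, ht, hst⟩ := exists_lt_of_csInf_lt (hne x) h.1
      obtain ⟨s, hs, hss⟩ := exists_lt_of_csInf_lt (hne y) h.2
      rcases ht with rfl | ht
      · exact absurd hst (not_lt.2 (hle1 _))
      rcases hs with rfl | hs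
      · exact absurd hss (not_lt.2 (hle1 _))
      obtain ⟨u, hu, huts⟩ := repMax_add ht hs
      have : u < sInf (insert 1 (bracketRepMax K br f g (x + y))) :=
        lt_of_le_of_lt huts (max_lt hst hss)
      exact absurd (csInf_le (hbdd _) (Set.mem_insert_of_mem _ hu)) (not_le.2 this)
    · intro c x
      refine le_csInf (hne x) ?_
      rintro t (rfl | ht)
      · exact hle1 _
      · exact csInf_le (hbdd _) (Set.mem_insert_of_mem _ (repMax_smul c ht))
    · exact le_antisymm
        (csInf_le (hbdd 0) (Set.mem_insert_of_mem _ (repMax_zero hbr00 hfz hgz)))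
        (hge0 0)
  have hAr1 : ∀ x, A.r x ≤ 1 := fun x => (hA.isCIF x).1.2
  have hBr1 : ∀ x, B.r x ≤ 1 := fun x => (hB.isCIF x).1.2
  have hAw1 : ∀ x, A.w x ≤ 1 := fun x => (hA.isCIF x).2.1.2
  have hBw1 : ∀ x, B.w x ≤ 1 := fun x => (hB.isCIF x).2.1.2
  have hArh0 : ∀ x, 0 ≤ A.rhat x := fun x => (hA.isCIF x).2.2.1.1
  have hBrh0 : ∀ x, 0 ≤ B.rhat x := fun x => (hB.isCIF x).2.2.1.1
  have hAwh0 : ∀ x, 0 ≤ A.what x := fun x => (hA.isCIF x).2.2.2.1.1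
  have hBwh0 : ∀ x, 0 ≤ B.what x := fun x => (hB.isCIF x).2.2.2.1.1
  obtain ⟨hrB, hrA', hrS, hrZ⟩ := supFacts A.r B.r hAr1 hBr1 hA.r_zero hB.r_zero
  obtain ⟨hwB, hwA', hwS, hwZ⟩ := supFacts A.w B.w hAw1 hBw1 hA.w_zero hB.w_zero
  obtain ⟨hrhB, hrhA', hrhS, hrhZ⟩ :=
    infFacts A.rhat B.rhat hArh0 hBrh0 hA.rhat_zero hB.rhat_zero
  obtain ⟨hwhB, hwhA', hwhS, hwhZ⟩ :=
    infFacts A.what B.what hAwh0 hBwh0 hA.what_zero hB.what_zero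
  -- r + rhat ≤ 1 for the bracket
  have hsum : ∀ x : V, sSup (insert 0 (bracketRepMin K br A.r B.r x)) +
      sInf (insert 1 (bracketRepMax K br A.rhat B.rhat x)) ≤ 1 := by
    intro x
    have hbddB : BddBelow (insert (1:ℝ) (bracketRepMax K br A.rhat B.rhat x)) :=
      ⟨0, fun t ht => zero_le_repMax hArh0 hBrh0 t ht⟩
    rw [← le_sub_iff_add_le]
    refine csSup_le ⟨0, Set.mem_insert _ _⟩ ?_
    rintro t (rfl | ⟨n, c, a, b, hx, ht⟩)
    · have : sInf (insert (1:ℝ) (bracketRepMax K br A.rhat B.rhat x)) ≤ 1 :=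
        csInf_le hbddB (Set.mem_insert _ _)
      linarith
    · set u := Finset.univ.sup' Finset.univ_nonempty
        (fun i => max (A.rhat (a i)) (B.rhat (b i))) with hudef
      have hu : sInf (insert 1 (bracketRepMax K br A.rhat B.rhat x)) ≤ u :=
        csInf_le hbddB (Set.mem_insert_of_mem _ ⟨n, c, a, b, hx, rfl⟩)
      obtain ⟨i0, -, hu_eq⟩ := Finset.exists_mem_eq_sup' Finset.univ_nonempty
        (fun i => max (A.rhat (a i)) (B.rhat (b i)))
      have ht1 : t ≤ A.r (a i0) := by
        rw [ht]; exact (Finset.inf'_le _ (Finset.mem_univ i0)).trans (min_le_left _ _)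
      have ht2 : t ≤ B.r (b i0) := by
        rw [ht]; exact (Finset.inf'_le _ (Finset.mem_univ i0)).trans (min_le_right _ _)
      have hAc : A.r (a i0) + A.rhat (a i0) ≤ 1 := (hA.isCIF (a i0)).2.2.2.2
      have hBc : B.r (b i0) + B.rhat (b i0) ≤ 1 := (hB.isCIF (b i0)).2.2.2.2
      have hu_eq' : u = max (A.rhat (a i0)) (B.rhat (b i0)) := by
        rw [hudef]; exact hu_eq
      rcases le_total (A.rhat (a i0)) (B.rhat (b i0)) with h | h
      · rw [max_eq_right h] at hu_eq'
        linarith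
      · rw [max_eq_left h] at hu_eq'
        linarith
  refine ⟨?_, hrA', hwA', hrhA', hwhA', hrS, hwS, hrhS, hwhS, hrZ, hwZ, hrhZ, hwhZ⟩
  intro x
  exact ⟨⟨(hrB x).1, (hrB x).2⟩, ⟨(hwB x).1, (hwB x).2⟩, ⟨(hrhB x).1, (hrhB x).2⟩,
    ⟨(hwhB x).1, (hwhB x).2⟩, hsum x⟩

end CIF
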